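/- Fix $0<p<1/2$ and a balanced Boolean function $f:\{0,1\}^n\to\{0,1\}$ that is not equal to any dictatorship function or its negation. Then the function $g^{\mathsf{sym}}_f(\alpha) = N^{\mathsf{sym}}_\alpha(f) - N^{\mathsf{sym}}_\alpha(f_0)$, which is not identically zero, has at most four real zeros counted with multiplicity. -/

import Mathlib

open Finset Real Filter

/-- The noise operator `T_p` applied to a Boolean function on the Hamming cube. -/
noncomputable def Tp (n : ℕ) (p : ℝ) (f : (Fin n → Bool) → Bool) (x : Fin n → Bool) : ℝ :=
  ∑ y : Fin n → Bool,
    p ^ hammingDist x y * (1 - p) ^ (n - hammingDist x y) * (if f y then 1 else 0)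

/-- A Boolean function is balanced if it takes the value 1 exactly half the time. -/
def IsBalanced (n : ℕ) (f : (Fin n → Bool) → Bool) : Prop :=
  ∑ y : Fin n → Bool, (if f y then (1 : ℝ) else 0) = 2 ^ n / 2

/-- Dictatorship function on coordinate `i`. -/
def dict (n : ℕ) (i : Fin n) : (Fin n → Bool) → Bool := fun y => y i

/-- `N_α(f) = ∑_x (T_p f x)^α` (real power). -/
noncomputable def Nal (n : ℕ) (p : ℝ) (f : (Fin n → Bool) → Bool) (α : ℝ) : ℝ :=
  ∑ x : Fin n → Bool, Tp n p f x ^ α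

/-- Symmetrized version `N^sym_α(f) = ∑_x (T_p f x)^α + (1 - T_p f x)^α`. -/
noncomputable def Nsym (n : ℕ) (p : ℝ) (f : (Fin n → Bool) → Bool) (α : ℝ) : ℝ :=
  ∑ x : Fin n → Bool, (Tp n p f x ^ α + (1 - Tp n p f x) ^ α)

/-- Binary entropy function, in bits. -/
noncomputable def binEnt (t : ℝ) : ℝ := -(t * Real.logb 2 t) - (1 - t) * Real.logb 2 (1 - t)

/-- Mutual information `I(f(Y); X)` for a balanced Boolean function `f`,
with `X` uniform on the cube and `Y` the output of a BSC(p) on input `X`. -/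
noncomputable def MI (n : ℕ) (p : ℝ) (f : (Fin n → Bool) → Bool) : ℝ :=
  1 - ((2 : ℝ) ^ n)⁻¹ * ∑ x : Fin n → Bool, binEnt (Tp n p f x)

/-!
Since `T_p f₀` takes the values `p` and `1 - p`, with `v = T_p f` we have
`g(α) = ∑ₓ (v x ^ α + (1 - v x) ^ α - p ^ α - (1 - p) ^ α) = ∑ₜ aₜ e^{α log t}`, where the
coefficient `aₜ` is nonpositive at `t = p` and `t = 1 - p` and nonnegative elsewhere. Ordered by
`log t`, the coefficients change sign at most four times, so by Laguerre's rule of signs `g` has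
at most four zeros. Laguerre's rule follows by induction on the number of sign changes: for `c₀`
separating the last sign change, `g' - c₀ g` has one sign change fewer, and by Rolle's theorem
applied to `e^{-c₀ α} g(α)`, `g` has at most one zero more than `g' - c₀ g`.

If all `aₜ` vanished, `v` would only take the values `p` and `1 - p`. Then `F = (-1)^f` satisfies
`T_p F = 1 - 2v = ±ρ` with `ρ = 1 - 2p`, so `‖T_p F‖² = ρ² ‖F‖²`, while `T_p` scales the Walsh
coefficient of `F` at `S` by `ρ^|S|`; as `F` has mean zero, its Walsh expansion lives on level
one, and a `±1`-valued function `∑ⱼ βⱼ (-1)^{x j}` is a dictatorship or the negation of one.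
-/

open scoped ContDiff

def HasAtMostZeros (F : ℝ → ℝ) (s : ℕ) : Prop :=
  ∀ (S : Finset ℝ) (μ : ℝ → ℕ), (∀ x ∈ S, ∀ k < μ x, iteratedDeriv k F x = 0) →
    ∑ x ∈ S, μ x ≤ s

namespace HasAtMostZeros

variable {F : ℝ → ℝ} {s : ℕ}

lemma of_forall_ne_zero (h : ∀ x, F x ≠ 0) : HasAtMostZeros F 0 := by
  intro S μ hz
  refine Nat.le_zero.mpr (sum_eq_zero fun x hx => ?_)
  by_contra hμ
  exact h x (by simpa using hz x hx 0 (Nat.pos_of_ne_zero hμ))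

lemma sum_le_of_injective (h : HasAtMostZeros F s) {r : ℕ} {α : Fin r → ℝ}
    (hα : Function.Injective α) (m : Fin r → ℕ)
    (hz : ∀ j, ∀ k < m j, iteratedDeriv k F (α j) = 0) : ∑ j, m j ≤ s := by
  classical
  have hμ : ∀ j, Function.extend α m 0 (α j) = m j := hα.extend_apply m 0
  calc ∑ j, m j = ∑ x ∈ univ.image α, Function.extend α m 0 x := by
        rw [sum_image fun i _ j _ hij => hα hij]
        simp only [hμ]
    _ ≤ s := h _ _ fun x hx k hk => by
        obtain ⟨j, -, rfl⟩ := mem_image.mp hx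
        exact hz j k (hμ j ▸ hk)

lemma exists_ne_zero (h : HasAtMostZeros F s) : ∃ x, F x ≠ 0 := by
  by_contra! hF
  have := h ((range (s + 1)).image (↑)) 1 fun x _ k hk => by simp [Nat.lt_one_iff.mp hk, hF]
  rw [sum_image fun _ _ _ _ h => Nat.cast_injective h] at this
  simp at this

end HasAtMostZeros

/-- Rolle's theorem applied to `t ↦ exp (-c t) F t`. -/
lemma exists_deriv_sub_mul_eq_zero {F : ℝ → ℝ} (hF : Differentiable ℝ F) (c : ℝ) {a b : ℝ}
    (hab : a < b) (ha : F a = 0) (hb : F b = 0) :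
    ∃ y ∈ Set.Ioo a b, deriv F y - c * F y = 0 := by
  have hG : ∀ t, HasDerivAt (fun t => exp (-c * t) * F t)
      (exp (-c * t) * (deriv F t - c * F t)) t := fun t =>
    (((hasDerivAt_id' t).const_mul (-c)).exp.fun_mul (hF t).hasDerivAt).congr_deriv (by ring)
  obtain ⟨y, hy, hy0⟩ := exists_hasDerivAt_eq_zero hab
    (by have := hF.continuous; fun_prop : Continuous fun t => exp (-c * t) * F t).continuousOn
    (by simp [ha, hb]) fun t _ => hG t
  exact ⟨y, hy, (mul_eq_zero.mp hy0).resolve_left (exp_pos _).ne'⟩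

lemma exists_finset_deriv_sub_mul_eq_zero {F : ℝ → ℝ} (hF : Differentiable ℝ F) (c : ℝ)
    (S : Finset ℝ) (hS : ∀ x ∈ S, F x = 0) :
    ∃ Y : Finset ℝ, Disjoint S Y ∧ #S ≤ #Y + 1 ∧ ∀ y ∈ Y, deriv F y - c * F y = 0 := by
  classical
  suffices ∃ Y : Finset ℝ, (∀ y ∈ Y, ∃ z ∈ S, y < z) ∧ Disjoint S Y ∧ #S ≤ #Y + 1 ∧
      ∀ y ∈ Y, deriv F y - c * F y = 0 from
    let ⟨Y, _, hY⟩ := this; ⟨Y, hY⟩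
  induction S using Finset.induction_on_max with
  | empty => exact ⟨∅, by simp⟩
  | insert a S haS ih =>
    obtain ⟨Y, hYS, hdisj, hcard, hY⟩ := ih fun x hx => hS x (mem_insert_of_mem hx)
    rcases S.eq_empty_or_nonempty with rfl | hne
    · exact ⟨∅, by simp⟩
    have hb := S.max'_mem hne
    obtain ⟨y, ⟨hby, hya⟩, hy⟩ := exists_deriv_sub_mul_eq_zero hF c (haS _ hb)
      (hS _ (mem_insert_of_mem hb)) (hS a (mem_insert_self a S))
    have hYa : ∀ y' ∈ Y, y' < a := fun y' hy' =>
      let ⟨z, hz, hyz⟩ := hYS y' hy'; hyz.trans (haS z hz)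
    have hyY : y ∉ Y := fun h =>
      let ⟨z, hz, hyz⟩ := hYS y h; (S.le_max' z hz).not_gt (hby.trans hyz)
    have hyS : y ∉ S := fun h => (S.le_max' y h).not_gt hby
    have haS' : a ∉ S := fun h => (haS a h).false
    refine ⟨insert y Y, ?_, ?_, ?_, ?_⟩
    · refine forall_mem_insert _ _ _ |>.mpr ⟨⟨a, mem_insert_self a S, hya⟩, fun y' hy' => ?_⟩
      obtain ⟨z, hz, h⟩ := hYS y' hy'
      exact ⟨z, mem_insert_of_mem hz, h⟩
    · rw [disjoint_insert_left, disjoint_insert_right, mem_insert, not_or]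
      exact ⟨⟨hya.ne', fun h => (hYa a h).false⟩, hyS, hdisj⟩
    · rw [card_insert_of_notMem haS', card_insert_of_notMem hyY]
      omega
    · simpa only [mem_insert, forall_eq_or_imp] using ⟨hy, hY⟩

lemma iteratedDeriv_deriv_sub_mul {F : ℝ → ℝ} (hF : ContDiff ℝ ∞ F) (c : ℝ) (k : ℕ) (x : ℝ) :
    iteratedDeriv k (fun t => deriv F t - c * F t) x =
      iteratedDeriv (k + 1) F x - c * iteratedDeriv k F x := by
  have hF' : ContDiff ℝ ∞ (deriv F) := (contDiff_infty_iff_deriv.mp hF).2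
  rw [iteratedDeriv_fun_sub (hF'.contDiffAt.of_le (mod_cast le_top))
      ((contDiffAt_const.mul hF.contDiffAt).of_le (mod_cast le_top)),
    iteratedDeriv_const_mul_field, iteratedDeriv_succ']

lemma HasAtMostZeros.of_deriv_sub_mul {F : ℝ → ℝ} {s : ℕ} (hF : ContDiff ℝ ∞ F) (c : ℝ)
    (h : HasAtMostZeros (fun t => deriv F t - c * F t) s) : HasAtMostZeros F (s + 1) := by
  classical
  intro S μ hz
  set S' := S.filter (μ · ≠ 0)
  have hS' : ∀ x ∈ S', x ∈ S ∧ 0 < μ x := fun x hx =>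
    ⟨(mem_filter.mp hx).1, Nat.pos_of_ne_zero (mem_filter.mp hx).2⟩
  obtain ⟨Y, hdisj, hcard, hY⟩ := exists_finset_deriv_sub_mul_eq_zero
    (hF.differentiable (by simp)) c S' fun x hx => by
      simpa using hz x (hS' x hx).1 0 (hS' x hx).2
  -- The Rolle points are zeros of `F' - c F`, and a zero of `F` of order `μ x` is one of order
  -- `μ x - 1`.
  have hH := h (S' ∪ Y) (fun x => if x ∈ Y then 1 else μ x - 1) fun x hx k hk => by
    split_ifs at hk with hxY
    · obtain rfl : k = 0 := by omega
      simpa using hY x hxY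
    · have hxS := (hS' x ((mem_union.mp hx).resolve_right hxY)).1
      rw [iteratedDeriv_deriv_sub_mul hF, hz x hxS (k + 1) (by omega), hz x hxS k (by omega)]
      ring
  rw [sum_union hdisj, sum_ite_of_true fun x hx => hx,
    sum_ite_of_false fun x hx hxY => disjoint_left.mp hdisj hx hxY, sum_const, smul_eq_mul,
    mul_one] at hH
  have hsum : ∑ x ∈ S', μ x = ∑ x ∈ S', (μ x - 1) + #S' := by
    rw [card_eq_sum_ones, ← sum_add_distrib]
    exact sum_congr rfl fun x hx => (Nat.sub_add_cancel (hS' x hx).2).symm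
  calc ∑ x ∈ S, μ x = ∑ x ∈ S', μ x := (sum_filter_ne_zero S).symm
    _ ≤ s + 1 := by omega

section ExpSum

variable {ι : Type*} (I : Finset ι) (a c : ι → ℝ)

lemma contDiff_expSum : ContDiff ℝ ∞ fun t => ∑ i ∈ I, a i * exp (c i * t) := by
  fun_prop

lemma deriv_expSum_sub_mul (c₀ t : ℝ) :
    deriv (fun t => ∑ i ∈ I, a i * exp (c i * t)) t - c₀ * ∑ i ∈ I, a i * exp (c i * t) =
      ∑ i ∈ I, a i * (c i - c₀) * exp (c i * t) := by
  have hd : HasDerivAt (fun t => ∑ i ∈ I, a i * exp (c i * t))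
      (∑ i ∈ I, a i * (exp (c i * t) * c i)) t :=
    HasDerivAt.fun_sum fun i _ =>
      (((hasDerivAt_id' t).const_mul (c i)).exp.const_mul (a i)).congr_deriv (by ring)
  rw [hd.deriv, mul_sum, ← sum_sub_distrib]
  exact sum_congr rfl fun i _ => by ring

lemma expSum_pos (ha : ∀ i ∈ I, 0 ≤ a i) (hne : ∃ i ∈ I, a i ≠ 0) (t : ℝ) :
    0 < ∑ i ∈ I, a i * exp (c i * t) := by
  obtain ⟨i, hi, hai⟩ := hne
  exact sum_pos' (fun j hj => mul_nonneg (ha j hj) (exp_pos _).le)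
    ⟨i, hi, mul_pos ((ha i hi).lt_of_ne' hai) (exp_pos _)⟩

/-- Ordered by the exponents `c i`, the coefficients `a i` change sign at most `s` times:
`a i` lies in the `g i`-th block, on which it has the sign of `(-1) ^ (g i + e)`. -/
def SignChangesLE (s : ℕ) : Prop :=
  ∃ (g : ι → ℕ) (e : ℕ), (∀ i ∈ I, ∀ j ∈ I, c i ≤ c j → g i ≤ g j) ∧
    ∀ i ∈ I, g i ≤ s ∧ 0 ≤ (-1) ^ (g i + e) * a i

variable {I a c}

lemma SignChangesLE.exists_mul_sub {s : ℕ} (h : SignChangesLE I a c (s + 1)) :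
    ∃ c₀, SignChangesLE I (fun i => a i * (c i - c₀)) c s ∧ ∀ i ∈ I, c i ≠ c₀ := by
  obtain ⟨g, e, hmono, hg⟩ := h
  obtain ⟨c₀, hlow, hhigh⟩ := Order.exists_between_finsets ((I.filter (g · ≤ s)).image c)
    ((I.filter (s < g ·)).image c) <| by
      simp only [mem_image, mem_filter, forall_exists_index, and_imp]
      rintro _ i hi his rfl _ j hj hjs rfl
      by_contra! hji
      exact absurd (hmono j hj i hi hji) (by omega)
  have hlow' : ∀ i ∈ I, g i ≤ s → c i < c₀ := fun i hi his =>
    hlow _ (mem_image_of_mem c (mem_filter.mpr ⟨hi, his⟩))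
  have hhigh' : ∀ i ∈ I, s < g i → c₀ < c i := fun i hi his =>
    hhigh _ (mem_image_of_mem c (mem_filter.mpr ⟨hi, his⟩))
  -- Multiplying by `c i - c₀` flips the signs below `c₀`, merging the last two blocks.
  refine ⟨c₀, ⟨fun i => min (g i) s, e + 1,
    fun i hi j hj hij => min_le_min_right s (hmono i hi j hj hij),
    fun i hi => ⟨min_le_right _ _, ?_⟩⟩, fun i hi => ?_⟩
  · beta_reduce
    rcases le_or_gt (g i) s with his | his
    · calc 0 ≤ (-1) ^ (g i + e) * a i * (c₀ - c i) :=
            mul_nonneg (hg i hi).2 (sub_nonneg.mpr (hlow' i hi his).le)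
        _ = _ := by rw [min_eq_left his]; ring
    · have hgi : g i = s + 1 := le_antisymm (hg i hi).1 his
      calc 0 ≤ (-1) ^ (g i + e) * a i * (c i - c₀) :=
            mul_nonneg (hg i hi).2 (sub_nonneg.mpr (hhigh' i hi his).le)
        _ = _ := by rw [min_eq_right his.le, hgi]; ring
  · rcases le_or_gt (g i) s with his | his
    · exact (hlow' i hi his).ne
    · exact (hhigh' i hi his).ne'

/-- Laguerre's rule of signs. -/
theorem SignChangesLE.hasAtMostZeros {s : ℕ} (h : SignChangesLE I a c s)
    (hne : ∃ i ∈ I, a i ≠ 0) : HasAtMostZeros (fun t => ∑ i ∈ I, a i * exp (c i * t)) s := by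
  induction s generalizing a with
  | zero =>
    obtain ⟨g, e, -, hg⟩ := h
    refine HasAtMostZeros.of_forall_ne_zero fun t ht => (expSum_pos I (fun i => (-1) ^ e * a i) c
      (fun i hi => ?_) ?_ t).ne' ?_
    · simpa [Nat.le_zero.mp (hg i hi).1] using (hg i hi).2
    · obtain ⟨i, hi, hai⟩ := hne
      exact ⟨i, hi, mul_ne_zero (by simp) hai⟩
    · simp_rw [mul_assoc, ← mul_sum, ht, mul_zero]
  | succ s ih =>
    obtain ⟨c₀, hc₀, hne₀⟩ := h.exists_mul_sub
    refine HasAtMostZeros.of_deriv_sub_mul (contDiff_expSum I a c) c₀ ?_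
    simp_rw [deriv_expSum_sub_mul]
    obtain ⟨i, hi, hai⟩ := hne
    exact ih hc₀ ⟨i, hi, mul_ne_zero hai (sub_ne_zero.mpr (hne₀ i hi))⟩

end ExpSum

lemma signChangesLE_log_four {I : Finset ℝ} {a : ℝ → ℝ} {p q : ℝ} (hpq : p < q)
    (hI : ∀ t ∈ I, 0 < t) (hpos : ∀ t ∈ I, t ≠ p → t ≠ q → 0 ≤ a t) (hp : a p ≤ 0)
    (hq : a q ≤ 0) : SignChangesLE I a log 4 := by
  refine ⟨fun t => if t < p then 0 else if t = p then 1 else if t < q then 2 else if t = q then 3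
    else 4, 0, fun t ht t' ht' htt' => ?_, fun t ht => ⟨?_, ?_⟩⟩ <;> beta_reduce
  · rcases ((log_le_log_iff (hI t ht) (hI t' ht')).mp htt').eq_or_lt with rfl | htt'
    · rfl
    split_ifs <;> first | omega | (exfalso; subst_vars; linarith)
  · split_ifs <;> omega
  · split_ifs with h₁ h₂ h₃ h₄ <;> norm_num
    · exact hpos t ht h₁.ne (h₁.trans hpq).ne
    · exact h₂ ▸ hp
    · exact hpos t ht h₂ h₃.ne
    · exact h₄ ▸ hq
    · exact hpos t ht h₂ h₄

def boolSign (b : Bool) : ℝ := if b then -1 else 1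

lemma boolSign_injective : Function.Injective boolSign := by
  intro a b h
  cases a <;> cases b <;> norm_num [boolSign] at h <;> rfl

lemma boolSign_not (b : Bool) : boolSign (!b) = -boolSign b := by
  cases b <;> norm_num [boolSign]

lemma boolSign_sq (b : Bool) : boolSign b ^ 2 = 1 := by
  cases b <;> norm_num [boolSign]

lemma one_add_boolSign_mul_boolSign (a b : Bool) :
    1 + boolSign a * boolSign b = if a = b then 2 else 0 := by
  cases a <;> cases b <;> norm_num [boolSign]

lemma boolSign_eq_one_sub_two_mul (b : Bool) : boolSign b = 1 - 2 * (if b then 1 else 0) := by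
  cases b <;> norm_num [boolSign]

lemma sum_eq_sum_singleton_of_card_ne_one {α M : Type*} [Fintype α] [DecidableEq α]
    [AddCommMonoid M] (g : Finset α → M) (h : ∀ S, #S ≠ 1 → g S = 0) : ∑ S, g S = ∑ j, g {j} := by
  rw [← sum_subset (subset_univ (powersetCard 1 univ)) fun S _ hS => h S
    fun hS1 => hS (mem_powersetCard.mpr ⟨subset_univ S, hS1⟩), powersetCard_one, sum_map]
  rfl

section Walsh

variable {n : ℕ}

def walsh (S : Finset (Fin n)) (x : Fin n → Bool) : ℝ := ∏ i ∈ S, boolSign (x i)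

lemma sum_walsh_mul_walsh (x y : Fin n → Bool) :
    ∑ S, walsh S x * walsh S y = if x = y then 2 ^ n else 0 := by
  simp_rw [walsh, ← prod_mul_distrib, ← powerset_univ, ← prod_one_add,
    one_add_boolSign_mul_boolSign, Fintype.prod_ite_zero, funext_iff]
  simp

noncomputable def walshCoeff (F : (Fin n → Bool) → ℝ) (S : Finset (Fin n)) : ℝ :=
  (2 ^ n)⁻¹ * ∑ x, F x * walsh S x

lemma sum_mul_walsh (F : (Fin n → Bool) → ℝ) (S : Finset (Fin n)) :
    ∑ x, F x * walsh S x = 2 ^ n * walshCoeff F S := by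
  rw [walshCoeff, mul_inv_cancel_left₀ (by positivity)]

lemma sum_walshCoeff_mul_walsh (F : (Fin n → Bool) → ℝ) (x : Fin n → Bool) :
    ∑ S, walshCoeff F S * walsh S x = F x := by
  calc ∑ S, walshCoeff F S * walsh S x
      = (2 ^ n)⁻¹ * ∑ y, F y * ∑ S, walsh S y * walsh S x := by
        simp_rw [walshCoeff, mul_assoc, ← mul_sum, sum_mul, mul_sum]
        rw [sum_comm]
        simp_rw [mul_assoc]
    _ = F x := by
        simp_rw [sum_walsh_mul_walsh, mul_ite, mul_zero, sum_ite_eq', if_pos (mem_univ x)]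
        field_simp

lemma sum_sq_eq_sum_walshCoeff_sq (F : (Fin n → Bool) → ℝ) :
    ∑ x, F x ^ 2 = 2 ^ n * ∑ S, walshCoeff F S ^ 2 := by
  calc ∑ x, F x ^ 2 = ∑ x, F x * ∑ S, walshCoeff F S * walsh S x := by
        simp_rw [sum_walshCoeff_mul_walsh, sq]
    _ = ∑ S, walshCoeff F S * ∑ x, F x * walsh S x := by
        simp_rw [mul_sum]
        rw [sum_comm]
        exact sum_congr rfl fun _ _ => sum_congr rfl fun _ _ => by ring
    _ = 2 ^ n * ∑ S, walshCoeff F S ^ 2 := by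
        simp_rw [sum_mul_walsh, mul_sum]
        exact sum_congr rfl fun _ _ => by ring

lemma sum_walshCoeff_sq_of_sq_eq {F : (Fin n → Bool) → ℝ} {c : ℝ} (h : ∀ x, F x ^ 2 = c) :
    ∑ S, walshCoeff F S ^ 2 = c := by
  have := sum_sq_eq_sum_walshCoeff_sq F
  simp only [h, sum_const, card_univ, Fintype.card_pi, Fintype.card_bool, prod_const,
    Fintype.card_fin, nsmul_eq_mul, Nat.cast_pow, Nat.cast_ofNat] at this
  exact (mul_left_cancel₀ (by positivity) this).symm

end Walsh

section Noise

variable (n : ℕ) (p : ℝ)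

/-- `Tp n p f` is definitionally `noise n p` applied to the indicator of `f`. -/
noncomputable def noise (F : (Fin n → Bool) → ℝ) (x : Fin n → Bool) : ℝ :=
  ∑ y, p ^ hammingDist x y * (1 - p) ^ (n - hammingDist x y) * F y

variable {n}

lemma noiseWeight_eq_prod (x y : Fin n → Bool) :
    p ^ hammingDist x y * (1 - p) ^ (n - hammingDist x y) =
      ∏ i, if x i = y i then 1 - p else p := by
  have hcard : #{i | x i = y i} = n - hammingDist x y := by
    have := card_filter_add_card_filter_not (s := univ) (p := fun i => x i = y i)
    rw [card_univ, Fintype.card_fin] at this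
    simp only [hammingDist, ne_eq]
    omega
  rw [prod_ite, prod_const, prod_const, hcard, hammingDist, mul_comm]

lemma noise_walsh (S : Finset (Fin n)) (x : Fin n → Bool) :
    noise n p (walsh S) x = (1 - 2 * p) ^ #S * walsh S x := by
  have hcoord : ∀ i, ∑ b, (if x i = b then 1 - p else p) * (if i ∈ S then boolSign b else 1) =
      if i ∈ S then (1 - 2 * p) * boolSign (x i) else 1 := fun i => by
    rw [Fintype.sum_bool]
    by_cases hi : i ∈ S <;> cases x i <;> simp only [hi, boolSign] <;> norm_num <;> ring
  simp_rw [noise, noiseWeight_eq_prod, walsh, ← Fintype.prod_ite_mem S, ← prod_mul_distrib]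
  rw [← Fintype.prod_sum fun i b => (if x i = b then 1 - p else p) *
    if i ∈ S then boolSign b else 1]
  simp_rw [hcoord, Fintype.prod_ite_mem, prod_mul_distrib, prod_const]

lemma sum_noiseWeight (x : Fin n → Bool) :
    ∑ y, p ^ hammingDist x y * (1 - p) ^ (n - hammingDist x y) = 1 := by
  simpa [noise, walsh] using noise_walsh p ∅ x

lemma walshCoeff_noise (F : (Fin n → Bool) → ℝ) (S : Finset (Fin n)) :
    walshCoeff (noise n p F) S = (1 - 2 * p) ^ #S * walshCoeff F S := by
  have hsym : ∑ x, noise n p F x * walsh S x = ∑ y, F y * noise n p (walsh S) y := by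
    simp_rw [noise, sum_mul, mul_sum]
    rw [sum_comm]
    exact sum_congr rfl fun y _ => sum_congr rfl fun x _ => by rw [hammingDist_comm]; ring
  simp_rw [walshCoeff, hsym, noise_walsh, mul_sum]
  exact sum_congr rfl fun _ _ => by ring

lemma noise_boolSign (f : (Fin n → Bool) → Bool) (x : Fin n → Bool) :
    noise n p (fun y => boolSign (f y)) x = 1 - 2 * Tp n p f x := by
  simp_rw [noise, boolSign_eq_one_sub_two_mul, mul_sub, mul_one, sum_sub_distrib,
    sum_noiseWeight, Tp, mul_sum]
  exact congrArg _ (sum_congr rfl fun _ _ => by ring)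

lemma one_sub_Tp (f : (Fin n → Bool) → Bool) (x : Fin n → Bool) :
    1 - Tp n p f x = Tp n p (fun y => !f y) x := by
  rw [← sum_noiseWeight p x, Tp, Tp, ← sum_sub_distrib]
  exact sum_congr rfl fun y _ => by cases f y <;> simp

lemma Tp_pos {p : ℝ} (hp : 0 < p) (hp1 : p < 1) {f : (Fin n → Bool) → Bool}
    (hf : ∃ y, f y = true) (x : Fin n → Bool) : 0 < Tp n p f x := by
  obtain ⟨y, hy⟩ := hf
  have hw : ∀ y, 0 < p ^ hammingDist x y * (1 - p) ^ (n - hammingDist x y) := fun y => by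
    have := sub_pos.mpr hp1
    positivity
  exact sum_pos' (fun z _ => mul_nonneg (hw z).le (by split_ifs <;> norm_num))
    ⟨y, mem_univ y, by simpa [hy] using hw y⟩

lemma Tp_mem_Ioo_of_isBalanced {p : ℝ} (hp : 0 < p) (hp1 : p < 1) {f : (Fin n → Bool) → Bool}
    (hf : IsBalanced n f) (x : Fin n → Bool) : Tp n p f x ∈ Set.Ioo 0 1 := by
  have hpos : (0 : ℝ) < 2 ^ n := by positivity
  refine ⟨Tp_pos hp hp1 ?_ x, sub_pos.mp ((one_sub_Tp p f x).symm ▸ Tp_pos hp hp1 ?_ x)⟩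
  · by_contra! h
    have : ∑ y, (if f y then (1 : ℝ) else 0) = 0 := sum_eq_zero fun y _ => by simp [h y]
    rw [IsBalanced, this] at hf
    linarith
  · by_contra! h
    have : ∑ y, (if f y then (1 : ℝ) else 0) = 2 ^ n := by simp_all
    rw [IsBalanced, this] at hf
    linarith

lemma Tp_dict (i : Fin n) (x : Fin n → Bool) :
    Tp n p (dict n i) x = if x i then 1 - p else p := by
  have h := noise_boolSign p (dict n i) x
  have hw : (fun y => boolSign (dict n i y)) = walsh {i} := by
    ext y
    rw [walsh, prod_singleton, dict]
  rw [hw, noise_walsh, card_singleton, walsh, prod_singleton] at h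
  cases hx : x i <;> simp only [hx, boolSign] at h ⊢ <;> norm_num at h ⊢ <;> linarith

lemma Nsym_dict (i : Fin n) (α : ℝ) :
    Nsym n p (dict n i) α = ∑ _x : Fin n → Bool, (p ^ α + (1 - p) ^ α) := by
  refine sum_congr rfl fun x _ => ?_
  rw [Tp_dict]
  split_ifs
  · rw [sub_sub_cancel, add_comm]
  · rfl

end Noise

lemma eq_zero_of_sum_sq_pow_mul_eq {ι : Type*} [Fintype ι] {A : ι → ℝ} {d : ι → ℕ} {ρ : ℝ}
    (hρ0 : 0 < ρ) (hρ1 : ρ < 1) (h0 : ∀ i, d i = 0 → A i = 0)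
    (h : ∑ i, (ρ ^ d i * A i) ^ 2 = ρ ^ 2 * ∑ i, A i ^ 2) {i : ι} (hi : d i ≠ 1) : A i = 0 := by
  have hρ2 : ρ ^ 2 < 1 := pow_lt_one₀ hρ0.le hρ1 two_ne_zero
  have hterm : ∀ j, 0 ≤ A j ^ 2 * (ρ ^ 2 - (ρ ^ 2) ^ d j) := fun j => by
    rcases Nat.eq_zero_or_pos (d j) with hd | hd
    · simp [h0 j hd]
    · exact mul_nonneg (sq_nonneg _)
        (sub_nonneg.mpr (pow_le_of_le_one (by positivity) hρ2.le hd.ne'))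
  have hsum : ∑ j, A j ^ 2 * (ρ ^ 2 - (ρ ^ 2) ^ d j) = 0 := by
    have hj : ∀ j, A j ^ 2 * (ρ ^ 2 - (ρ ^ 2) ^ d j) = ρ ^ 2 * A j ^ 2 - (ρ ^ d j * A j) ^ 2 :=
      fun j => by ring
    rw [sum_congr rfl fun j _ => hj j, sum_sub_distrib, ← mul_sum, h, sub_self]
  have hi0 := (sum_eq_zero_iff_of_nonneg fun j _ => hterm j).mp hsum i (mem_univ i)
  rcases Nat.eq_zero_or_pos (d i) with hd | hd
  · exact h0 i hd
  · have : (ρ ^ 2) ^ d i < ρ ^ 2 := pow_lt_self_of_lt_one₀ (by positivity) hρ2 (by omega)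
    exact pow_eq_zero_iff two_ne_zero |>.mp <|
      (mul_eq_zero.mp hi0).resolve_right (sub_pos.mpr this).ne'

lemma exists_forall_ne_eq_zero_of_sum_sq_eq {ι : Type*} [Fintype ι] {β : ι → ℝ} {c : ℝ}
    (hc : 0 < c) (hβ : ∀ j, β j = 0 ∨ β j ^ 2 = c) (hsum : ∑ j, β j ^ 2 = c) :
    ∃ j, ∀ k ≠ j, β k = 0 := by
  classical
  obtain ⟨j, hj⟩ : ∃ j, β j ≠ 0 := by
    by_contra! h
    simp only [h, ne_eq, OfNat.ofNat_ne_zero, not_false_eq_true, zero_pow, sum_const_zero]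
      at hsum
    linarith
  refine ⟨j, fun k hkj => (hβ k).resolve_right fun hk => ?_⟩
  have := sum_le_univ_sum_of_nonneg (s := {k, j}) fun i => sq_nonneg (β i)
  rw [sum_pair hkj, hsum, hk, (hβ j).resolve_left hj] at this
  linarith

lemma eq_zero_or_sq_eq_one_of_boolSign_eq_sum {n : ℕ} {f : (Fin n → Bool) → Bool}
    {β : Fin n → ℝ} (hf : ∀ y, boolSign (f y) = ∑ j, β j * boolSign (y j)) (j : Fin n) :
    β j = 0 ∨ β j ^ 2 = 1 := by
  set y₀ : Fin n → Bool := fun _ => false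
  have hflip : boolSign (f y₀) - boolSign (f (Function.update y₀ j true)) = 2 * β j := by
    rw [hf, hf, ← sum_sub_distrib, sum_eq_single j (fun k _ hk => by
      rw [Function.update_of_ne hk]; ring) (by simp)]
    simp only [Function.update_self, y₀, boolSign]
    norm_num
    ring
  cases h₀ : f y₀ <;> cases h₁ : f (Function.update y₀ j true) <;>
    simp only [h₀, h₁, boolSign] at hflip <;> norm_num at hflip
  all_goals first
    | exact .inl (by linarith)
    | exact .inr (by nlinarith)

lemma exists_eq_dict_of_walshCoeff_eq_zero {n : ℕ} {f : (Fin n → Bool) → Bool}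
    (h : ∀ S, #S ≠ 1 → walshCoeff (fun y => boolSign (f y)) S = 0) :
    ∃ j, f = dict n j ∨ f = fun y => !y j := by
  set G := fun y => boolSign (f y)
  set β := fun j => walshCoeff G {j}
  have hG : ∀ y, G y = ∑ j, β j * boolSign (y j) := fun y => by
    rw [← sum_walshCoeff_mul_walsh G y,
      sum_eq_sum_singleton_of_card_ne_one _ fun S hS => by rw [h S hS, zero_mul]]
    simp only [walsh, prod_singleton, β]
  have hsum : ∑ j, β j ^ 2 = 1 := by
    rw [← sum_walshCoeff_sq_of_sq_eq fun y => boolSign_sq (f y),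
      sum_eq_sum_singleton_of_card_ne_one _ fun S hS => by rw [h S hS]; ring]
  obtain ⟨j, hj⟩ := exists_forall_ne_eq_zero_of_sum_sq_eq one_pos
    (eq_zero_or_sq_eq_one_of_boolSign_eq_sum hG) hsum
  have hGj : ∀ y, G y = β j * boolSign (y j) := fun y => by
    rw [hG, sum_eq_single j (fun k _ hk => by rw [hj k hk, zero_mul]) (by simp)]
  rw [sum_eq_single j (fun k _ hk => by rw [hj k hk]; ring) (by simp), sq_eq_one_iff] at hsum
  refine ⟨j, hsum.imp (fun h1 => funext fun y => boolSign_injective ?_)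
    (fun h1 => funext fun y => boolSign_injective ?_)⟩
  · simpa [h1, dict] using hGj y
  · simpa [h1, boolSign_not] using hGj y

theorem exists_eq_dict_of_Tp_eq {n : ℕ} {p : ℝ} (hp : 0 < p) (hp2 : p < 1 / 2)
    {f : (Fin n → Bool) → Bool} (hf : IsBalanced n f)
    (hval : ∀ x, Tp n p f x = p ∨ Tp n p f x = 1 - p) :
    ∃ j, f = dict n j ∨ f = fun y => !y j := by
  set G := fun y => boolSign (f y)
  have hnorm_noise : ∑ S, ((1 - 2 * p) ^ #S * walshCoeff G S) ^ 2 = (1 - 2 * p) ^ 2 := by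
    simp_rw [← walshCoeff_noise]
    exact sum_walshCoeff_sq_of_sq_eq fun x => by
      rw [noise_boolSign]
      rcases hval x with h | h <;> rw [h]
      ring
  have hG0 : walshCoeff G ∅ = 0 := by
    rw [IsBalanced] at hf
    simp only [walshCoeff, walsh, prod_empty, mul_one, G, boolSign_eq_one_sub_two_mul,
      sum_sub_distrib, ← mul_sum, hf, sum_const, card_univ, Fintype.card_pi, Fintype.card_bool,
      prod_const, Fintype.card_fin, nsmul_eq_mul, Nat.cast_pow, Nat.cast_ofNat]
    ring
  refine exists_eq_dict_of_walshCoeff_eq_zero fun S hS =>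
    eq_zero_of_sum_sq_pow_mul_eq (by linarith : 0 < 1 - 2 * p) (by linarith : 1 - 2 * p < 1)
      (fun S hS0 => by rw [card_eq_zero.mp hS0, hG0]) ?_ hS
  rw [hnorm_noise, sum_walshCoeff_sq_of_sq_eq fun y => boolSign_sq (f y), mul_one]

/-- The coefficient of `t ^ α` in `u ^ α + (1 - u) ^ α - p ^ α - (1 - p) ^ α`. -/
noncomputable def symTerm (u p t : ℝ) : ℝ :=
  (if u = t then 1 else 0) + (if 1 - u = t then 1 else 0) -
    (if p = t then 1 else 0) - (if 1 - p = t then 1 else 0)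

lemma symTerm_nonneg {u p t : ℝ} (htp : t ≠ p) (htq : t ≠ 1 - p) : 0 ≤ symTerm u p t := by
  rw [symTerm, if_neg htp.symm, if_neg htq.symm]
  split_ifs <;> norm_num

lemma symTerm_nonpos {u p t : ℝ} (hp : p ≠ 1 - p) (ht : t = p ∨ t = 1 - p) :
    symTerm u p t ≤ 0 := by
  rw [symTerm]
  rcases ht with rfl | rfl <;> split_ifs <;> simp_all

lemma eq_or_eq_of_symTerm_eq_zero {u p : ℝ} (hp : p ≠ 1 - p) (h : symTerm u p p = 0) :
    u = p ∨ u = 1 - p := by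
  by_contra! hne
  rw [symTerm, if_neg hne.1, if_neg fun h => hne.2 (by linarith), if_pos rfl, if_neg hp.symm]
    at h
  norm_num at h

section SymCoeff

variable {X : Type*} [Fintype X] (v : X → ℝ) (p : ℝ)

noncomputable def symBases : Finset ℝ :=
  univ.image v ∪ univ.image (fun x => 1 - v x) ∪ {p, 1 - p}

noncomputable def symCoeff (t : ℝ) : ℝ := ∑ x, symTerm (v x) p t

lemma sum_symCoeff_mul (φ : ℝ → ℝ) :
    ∑ t ∈ symBases v p, symCoeff v p t * φ t =
      ∑ x, (φ (v x) + φ (1 - v x) - φ p - φ (1 - p)) := by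
  simp_rw [symCoeff, sum_mul]
  rw [sum_comm]
  refine sum_congr rfl fun x _ => ?_
  simp_rw [symTerm, sub_mul, add_mul, sum_sub_distrib, sum_add_distrib, sum_boole_mul]
  simp [symBases]

variable {v p}

lemma symCoeff_nonneg {t : ℝ} (htp : t ≠ p) (htq : t ≠ 1 - p) : 0 ≤ symCoeff v p t :=
  sum_nonneg fun _ _ => symTerm_nonneg htp htq

lemma symCoeff_nonpos (hp : p ≠ 1 - p) {t : ℝ} (ht : t = p ∨ t = 1 - p) : symCoeff v p t ≤ 0 :=
  sum_nonpos fun _ _ => symTerm_nonpos hp ht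

lemma eq_or_eq_of_symCoeff_eq_zero (hp : p ≠ 1 - p) (h : symCoeff v p p = 0) (x : X) :
    v x = p ∨ v x = 1 - p :=
  eq_or_eq_of_symTerm_eq_zero hp <|
    (sum_eq_zero_iff_of_nonpos fun _ _ => symTerm_nonpos hp (.inl rfl)).mp h x (mem_univ x)

end SymCoeff

lemma Nsym_sub_Nsym_dict_eq_expSum {n : ℕ} {p : ℝ} (hp : 0 < p) (hp1 : p < 1)
    {f : (Fin n → Bool) → Bool} (hf : IsBalanced n f) (i : Fin n) (α : ℝ) :
    Nsym n p f α - Nsym n p (dict n i) α =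
      ∑ t ∈ symBases (Tp n p f) p, symCoeff (Tp n p f) p t * exp (log t * α) := by
  rw [sum_symCoeff_mul, Nsym, Nsym_dict, ← sum_sub_distrib]
  refine sum_congr rfl fun x _ => ?_
  have hx := Tp_mem_Ioo_of_isBalanced hp hp1 hf x
  rw [rpow_def_of_pos hx.1, rpow_def_of_pos (sub_pos.mpr hx.2), rpow_def_of_pos hp,
    rpow_def_of_pos (sub_pos.mpr hp1)]
  ring

/-- For balanced `f` that is neither a dictatorship nor the negation of one,
`g^sym_f(α) = N^sym_α(f) - N^sym_α(f_0)` is not identically zero and has at most four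
real zeros counted with multiplicity. -/
theorem gsym_at_most_four_zeros (n : ℕ) (p : ℝ) (hp : 0 < p) (hp2 : p < 1/2)
    (f : (Fin n → Bool) → Bool) (hf : IsBalanced n f)
    (hnd : ∀ i : Fin n, f ≠ dict n i ∧ f ≠ fun y => !(y i)) (i : Fin n) :
    (∃ α : ℝ, Nsym n p f α - Nsym n p (dict n i) α ≠ 0) ∧
    (∀ (r : ℕ) (α : Fin r → ℝ), Function.Injective α → ∀ m : Fin r → ℕ,
      (∀ j : Fin r, ∀ k < m j,
        iteratedDeriv k (fun t : ℝ => Nsym n p f t - Nsym n p (dict n i) t) (α j) = 0) →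
      ∑ j : Fin r, m j ≤ 4) := by
  have hp1 : p < 1 := by linarith
  have hpq : p ≠ 1 - p := by intro h; linarith
  set v := Tp n p f
  have hbases : ∀ t ∈ symBases v p, 0 < t := by
    have hv := Tp_mem_Ioo_of_isBalanced hp hp1 hf
    simp only [symBases, mem_union, mem_image, mem_univ, true_and, mem_insert, mem_singleton]
    rintro t ((⟨x, rfl⟩ | ⟨x, rfl⟩) | rfl | rfl)
    exacts [(hv x).1, sub_pos.mpr (hv x).2, hp, sub_pos.mpr hp1]
  have hne : ∃ t ∈ symBases v p, symCoeff v p t ≠ 0 := by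
    by_contra! h
    obtain ⟨j, hj⟩ := exists_eq_dict_of_Tp_eq hp hp2 hf
      (eq_or_eq_of_symCoeff_eq_zero hpq (h p (by simp [symBases])))
    exact hj.elim (hnd j).1 (hnd j).2
  have hzeros := (signChangesLE_log_four (by linarith) hbases (fun t _ => symCoeff_nonneg)
    (symCoeff_nonpos hpq (.inl rfl)) (symCoeff_nonpos hpq (.inr rfl))).hasAtMostZeros hne
  rw [← funext (Nsym_sub_Nsym_dict_eq_expSum hp hp1 hf i)] at hzeros
  exact ⟨hzeros.exists_ne_zero, fun r α hα m hm => hzeros.sum_le_of_injective hα m hm⟩
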